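/- For all words u, v over a nonempty finite alphabet A, h(u·v) ≤ max(h(u) + ρ(v), ρ(u) + h(v)). -/

import Mathlib

/-- Simon's congruence of order `k`: `u` and `v` have the same subwords
(subsequences) of length at most `k`. -/
def SimonCong {A : Type*} (k : ℕ) (u v : List A) : Prop :=
  ∀ s : List A, s.length ≤ k → (s.Sublist u ↔ s.Sublist v)

/-- The subword distance `δ(u,v) = sup {k | u ∼ₖ v} ∈ ℕ ∪ {∞}`. -/
noncomputable def delta {A : Type*} (u v : List A) : ℕ∞ :=
  ⨆ k ∈ {k : ℕ | SimonCong k u v}, (k : ℕ∞)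

/-- Right side distance `r(u,t) = δ(u, u·t)`. -/
noncomputable def sideR {A : Type*} (u t : List A) : ℕ∞ :=
  delta u (u ++ t)

/-- Left side distance `ℓ(t,u) = δ(t·u, u)`. -/
noncomputable def sideL {A : Type*} (t u : List A) : ℕ∞ :=
  delta (t ++ u) u

/-- The piecewise complexity `h(u)`: the least `n` such that every word
`v` with `u ∼ₙ v` equals `u`. -/
noncomputable def pieceH {A : Type*} (u : List A) : ℕ :=
  sInf {n : ℕ | ∀ v : List A, SimonCong n u v → v = u}

/-- A word `u` is `m`-reduced if no strict subword of `u` is `∼ₘ`-equivalent to `u`. -/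
def MReduced {A : Type*} (m : ℕ) (u : List A) : Prop :=
  ∀ u' : List A, u'.Sublist u → u' ≠ u → ¬ SimonCong m u' u

/-- The piecewise minimality index `ρ(u)`: the least `m` such that `u` is `m`-reduced. -/
noncomputable def rho {A : Type*} (u : List A) : ℕ :=
  sInf {m : ℕ | MReduced m u}

/-!
Let `N = max (h(u) + ρ(v), ρ(u) + h(v))` and `z ∼_N u·v`. The key fact is that a `d`-reduced
word `v` cannot absorb a nonempty prefix: if `e·r ⊑ v` for every `r ⊑ v` with `|r| ≤ d`, then
`e` is empty, since otherwise the suffix of `v` after the leftmost embedding of `e` would be a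
strict subword `∼_d`-equivalent to `v`. Cutting `z` right after the shortest prefix that
contains every subword of `u` of length `≤ ρ(u)`, the remaining suffix is `∼_{h(v)} v`, hence
equal to `v`. Then `w·v ∼_N u·v`, and since `v` is `ρ(v)`-reduced every subword of `w` of
length `≤ h(u)` must embed into `u` (and conversely), so `w ∼_{h(u)} u` and `w = u`.
-/

section

open scoped List

variable {A : Type*}

theorem List.sublist_drop_of_append_sublist {r t w : List A} {i : ℕ} (h : r ++ t <+ w)
    (hi : ∀ j, r <+ w.take j → i ≤ j) : t <+ w.drop i := by
  obtain ⟨w₁, w₂, rfl, h₁, h₂⟩ := List.append_sublist_iff.1 h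
  have hle : i ≤ w₁.length := hi _ (by rwa [List.take_left' rfl])
  have hdrop := List.drop_sublist_drop_left (w₁ ++ w₂) hle
  rw [List.drop_left] at hdrop
  exact h₂.trans hdrop

theorem List.exists_take_sublist_drop_append_sublist {s r u v : List A}
    (h : s ++ r <+ u ++ v) (hr : r <+ v) :
    ∃ i ≤ s.length, s.take i <+ u ∧ s.drop i ++ r <+ v := by
  obtain ⟨α, β, heq, hα, hβ⟩ := List.sublist_append_iff.1 h
  rcases List.append_eq_append_iff.1 heq with ⟨c, rfl, -⟩ | ⟨c, rfl, rfl⟩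
  · exact ⟨s.length, le_rfl, by simpa using (List.sublist_append_left s c).trans hα,
      by simpa using hr⟩
  · exact ⟨α.length, by simp, by simpa using hα, by simpa using hβ⟩

namespace SimonCong

theorem symm {k : ℕ} {x y : List A} (h : SimonCong k x y) : SimonCong k y x :=
  fun s hs => (h s hs).symm

theorem mono {k l : ℕ} {x y : List A} (h : SimonCong l x y) (hkl : k ≤ l) : SimonCong k x y :=
  fun s hs => h s (hs.trans hkl)

theorem reverse {k : ℕ} {x y : List A} (h : SimonCong k x y) :
    SimonCong k x.reverse y.reverse := fun s hs => by
  simpa only [List.sublist_reverse_iff] using h s.reverse (by simpa using hs)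

end SimonCong

theorem eq_of_simonCong_length_succ {u v : List A} (h : SimonCong (u.length + 1) u v) :
    v = u := by
  have huv : u <+ v := (h u (by omega)).1 (List.Sublist.refl u)
  have htake : v.take (u.length + 1) <+ u := (h _ (by simp)).2 (List.take_sublist _ _)
  have hlen := htake.length_le
  simp only [List.length_take] at hlen
  exact (huv.eq_of_length_le (by omega)).symm

theorem eq_of_simonCong_pieceH {u v : List A} (h : SimonCong (pieceH u) u v) : v = u :=
  Nat.sInf_mem (s := {n | ∀ v : List A, SimonCong n u v → v = u})
    ⟨_, fun _ => eq_of_simonCong_length_succ⟩ v h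

namespace MReduced

theorem of_length (u : List A) : MReduced u.length u := fun _ hsub hne hcong =>
  hne (hsub.antisymm ((hcong u le_rfl).2 (List.Sublist.refl u)))

theorem reverse {d : ℕ} {u : List A} (hu : MReduced d u) : MReduced d u.reverse :=
  fun u' hsub hne hcong => hu u'.reverse (List.sublist_reverse_iff.1 hsub)
    (fun h => hne (by rw [← h, List.reverse_reverse]))
    (by simpa using hcong.reverse)

theorem eq_nil_of_forall_append_sublist {d : ℕ} {e v : List A} (hv : MReduced d v)
    (h : ∀ r, r <+ v → r.length ≤ d → e ++ r <+ v) : e = [] := by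
  classical
  by_contra he
  have hev : e <+ v := by simpa using h [] (List.nil_sublist v) (Nat.zero_le d)
  have hex : ∃ i, e <+ v.take i := ⟨v.length, by simpa using hev⟩
  set i := Nat.find hex
  -- the suffix of `v` after the leftmost embedding of `e`
  refine hv (v.drop i) (List.drop_sublist _ _) (fun hdrop => he ?_) fun r hr => ⟨?_, ?_⟩
  · have hlen := (Nat.find_spec hex).length_le
    have hdrop_len := congrArg List.length hdrop
    simp only [List.length_drop, List.length_take] at hlen hdrop_len
    exact List.eq_nil_of_length_eq_zero (by omega)
  · exact fun hrd => hrd.trans (List.drop_sublist _ _)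
  · exact fun hrv =>
      List.sublist_drop_of_append_sublist (h r hrv hr) fun j hj => Nat.find_min' hex hj

theorem sublist_of_forall_append_sublist {d : ℕ} {s u v : List A} (hv : MReduced d v)
    (h : ∀ r, r <+ v → r.length ≤ d → s ++ r <+ u ++ v) : s <+ u := by
  classical
  set j := Nat.findGreatest (fun i => s.take i <+ u) s.length
  have htake : s.take j <+ u :=
    Nat.findGreatest_spec (P := fun i => s.take i <+ u) (Nat.zero_le _) (by simp)
  suffices hdrop : s.drop j = [] by
    rwa [← List.take_append_drop j s, hdrop, List.append_nil]
  refine hv.eq_nil_of_forall_append_sublist fun r hr hrd => ?_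
  obtain ⟨i, hi, hiu, hiv⟩ := List.exists_take_sublist_drop_append_sublist (h r hr hrd) hr
  exact ((List.drop_sublist_drop_left s (Nat.le_findGreatest hi hiu)).append_right r).trans hiv

theorem sublist_of_forall_append_sublist' {d : ℕ} {s u v : List A} (hu : MReduced d u)
    (h : ∀ r, r <+ u → r.length ≤ d → r ++ s <+ u ++ v) : s <+ v := by
  refine List.reverse_sublist.1 (hu.reverse.sublist_of_forall_append_sublist fun r hr hrd => ?_)
  simpa using (h r.reverse (List.sublist_reverse_iff.1 hr) (by simpa using hrd)).reverse

end MReduced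

theorem mReduced_rho (u : List A) : MReduced (rho u) u :=
  Nat.sInf_mem (s := {m | MReduced m u}) ⟨_, MReduced.of_length u⟩

theorem SimonCong.cancel_right {d n : ℕ} {u w v : List A} (hv : MReduced d v)
    (h : SimonCong (n + d) (u ++ v) (w ++ v)) : SimonCong n u w := by
  have key : ∀ {x y}, SimonCong (n + d) (x ++ v) (y ++ v) →
      ∀ s : List A, s.length ≤ n → s <+ x → s <+ y := fun hxy s hs hsx =>
    hv.sublist_of_forall_append_sublist fun r hr hrd =>
      (hxy _ (by simp only [List.length_append]; omega)).1 (hsx.append hr)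
  exact fun s hs => ⟨key h s hs, key h.symm s hs⟩

theorem SimonCong.exists_eq_append {d n : ℕ} {u v z : List A} (hu : MReduced d u)
    (h : SimonCong (d + n) (u ++ v) z) : ∃ w₁ w₂, z = w₁ ++ w₂ ∧ SimonCong n v w₂ := by
  classical
  have hz : ∀ x, x.length ≤ d + n → x <+ u ++ v → x <+ z := fun x hx => (h x hx).1
  have hex : ∃ i, ∀ r, r <+ u → r.length ≤ d → r <+ z.take i := ⟨z.length, fun r hr hrd => by
    simpa using hz r (by omega) (hr.trans (List.sublist_append_left u v))⟩
  set i := Nat.find hex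
  refine ⟨z.take i, z.drop i, (List.take_append_drop i z).symm, fun s hs => ⟨fun hsv => ?_, ?_⟩⟩
  · rcases Nat.eq_zero_or_eq_succ_pred i with hi | hi
    · simpa [hi] using hz s (by omega) (hsv.trans (List.sublist_append_right u v))
    -- some short subword of `u` needs the letter at position `i - 1` of `z`
    obtain ⟨r, hr, hrd, hrz⟩ : ∃ r, r <+ u ∧ r.length ≤ d ∧ ¬ r <+ z.take (i - 1) := by
      simpa using Nat.find_min hex (show i - 1 < i by omega)
    refine List.sublist_drop_of_append_sublist
      (hz _ (by simp only [List.length_append]; omega) (hr.append hsv)) fun j hj => ?_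
    by_contra hji
    exact hrz (hj.trans (List.take_sublist_take_left (by omega)))
  · refine fun hsz => hu.sublist_of_forall_append_sublist' fun r hr hrd => ?_
    refine (h _ (by simp only [List.length_append]; omega)).2 ?_
    rw [← List.take_append_drop i z]
    exact (Nat.find_spec hex r hr hrd).append hsz

end

theorem stmt11_general {A : Type*} (u v : List A) :
    pieceH (u ++ v) ≤ max (pieceH u + rho v) (rho u + pieceH v) := by
  refine Nat.sInf_le fun z hz => ?_
  obtain ⟨w, w₂, rfl, hw₂⟩ := (hz.mono (le_max_right _ _)).exists_eq_append (mReduced_rho u)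
  rw [eq_of_simonCong_pieceH hw₂] at hz ⊢
  rw [eq_of_simonCong_pieceH ((hz.mono (le_max_left _ _)).cancel_right (mReduced_rho v))]

theorem stmt11 {A : Type*} [Fintype A] [Nonempty A] (u v : List A) :
    pieceH (u ++ v) ≤ max (pieceH u + rho v) (rho u + pieceH v) :=
  stmt11_general u v
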